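/- Let a ∈ K = F_{2^τ}((π)) and let b in an algebraic closure of K satisfy b² + b = a. Then D(a) = (π^{−2t+1}) for some integer t > 0 if and only if K(b) is a ramified quadratic extension of K. -/

import Mathlib

noncomputable section

/-- The finite field with `2 ^ τ` elements. -/
abbrev Fq (τ : ℕ) := GaloisField 2 τ

/-- The field of formal Laurent series `K = F_{2^τ}((π))`. -/
abbrev Kk (τ : ℕ) := LaurentSeries (Fq τ)

/-- The ring of integers `O = F_{2^τ}[[π]]`. -/
abbrev Ok (τ : ℕ) := PowerSeries (Fq τ)

/-- The Artin–Schreier defect `D(a) = ⋂_{h ∈ K} (h² + h + a)`, an intersection of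
principal fractional `O`-ideals (as `O`-submodules of `K`). -/
def ASdefect (τ : ℕ) (a : Kk τ) : Submodule (Ok τ) (Kk τ) :=
  ⨅ h : Kk τ, Submodule.span (Ok τ) {h ^ 2 + h + a}

open IntermediateField

/-- The uniformizer `π` of `K`, viewed as a Laurent series. -/
def pp (τ : ℕ) : Kk τ := algebraMap (Ok τ) (Kk τ) PowerSeries.X

/-- `L/K` is a ramified quadratic extension: it has degree 2 and the ramification
index is 2, i.e. the value group grows; for a quadratic extension of the discretely
valued field `K` this says that some nonzero element of `L` has a norm of odd
valuation. (Recall `ν(f) = f.order` on `K = F_{2^τ}((π))`.) -/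
def IsRamifiedQuadExt (τ : ℕ)
    (L : IntermediateField (Kk τ) (AlgebraicClosure (Kk τ))) : Prop :=
  Module.finrank (Kk τ) L = 2 ∧
    ∃ x : L, x ≠ 0 ∧ Odd (HahnSeries.order (Algebra.norm (Kk τ) x))

/-! A value `h² + h` of negative valuation has the even valuation `2 v(h)`. Since the residue
field `F` is perfect, an even negative leading term of `a` can be cancelled by some `h² + h`, and
once `v(a) ≥ 0` Hensel's lemma solves `h² + h + a = 0` unless the residue of `a` is not of the
form `e² + e`. So, modulo `℘(K) = {h² + h}`, `a` becomes `0`, an element of odd negative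
valuation, or a unit with residue outside `℘(F)`. In the odd case no `h² + h` can cancel the
leading term, so the valuations `v(h² + h + a)` attain their maximum there, which pins down
`D(a)`, and the norm of `b + h₀` has that odd valuation. In the residue case every `h² + h + a`
has even valuation, and so has every norm `u² + uv + v² a = v² ((u/v)² + u/v + a)` from `K(b)`:
the extension is unramified. -/

open HahnSeries

theorem sq_add_self_add_add {R : Type*} [CommRing R] [CharP R 2] (g h a : R) :
    (g + h) ^ 2 + (g + h) + a = g ^ 2 + g + (h ^ 2 + h + a) := by
  rw [CharTwo.add_sq]
  ring

theorem PowerSeries.exists_sq_add_self_add_eq_zero {R : Type*} [CommRing R] [CharP R 2]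
    (A : PowerSeries R) {e : R} (he : e ^ 2 + e + constantCoeff A = 0) :
    ∃ u : PowerSeries R, u ^ 2 + u + A = 0 := by
  have hmonic : (Polynomial.X ^ 2 + Polynomial.X + Polynomial.C A).Monic := by monicity!
  set f := Polynomial.X ^ 2 + Polynomial.X + Polynomial.C A with hf
  have hroot : f.eval (C e) ∈ Ideal.span {X} := by
    rw [Ideal.mem_span_singleton, X_dvd_iff]
    simpa [hf] using he
  have hsimple : (Polynomial.derivative f).eval (C e) = 1 := by
    simp [hf, ← two_mul, ← map_ofNat C, CharTwo.two_eq_zero]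
  obtain ⟨u, hu, -⟩ := HenselianRing.is_henselian f hmonic (C e) hroot
    (by rw [hsimple, map_one]; exact isUnit_one)
  exact ⟨u, by simpa [hf] using hu⟩

namespace LaurentSeries

variable {F : Type*} [Field F]

instance {p : ℕ} [CharP F p] : CharP (LaurentSeries F) p :=
  charP_of_injective_ringHom C_injective p

theorem orderTop_ofPowerSeries_nonneg (A : PowerSeries F) :
    0 ≤ (ofPowerSeries ℤ F A).orderTop := by
  rw [zero_le_orderTop_iff]
  by_contra! hneg
  have hA : ofPowerSeries ℤ F A ≠ 0 := by rintro hA; simp [hA] at hneg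
  apply coeff_order_eq_zero.not.mpr hA
  rw [PowerSeries.coeff_coe, if_pos hneg]

theorem exists_ofPowerSeries_eq_of_orderTop_nonneg {f : LaurentSeries F} (hf : 0 ≤ f.orderTop) :
    ∃ A : PowerSeries F, ofPowerSeries ℤ F A = f := by
  rcases eq_or_ne f 0 with rfl | hf0
  · exact ⟨0, map_zero _⟩
  rw [zero_le_orderTop_iff] at hf
  exact ⟨_, X_order_mul_powerSeriesPart (Int.toNat_of_nonneg hf)⟩

theorem coeff_zero_ofPowerSeries (A : PowerSeries F) :
    (ofPowerSeries ℤ F A).coeff 0 = PowerSeries.constantCoeff A := by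
  simpa using coeff_coe_powerSeries A 0

theorem algebraMap_X_zpow (n : ℤ) :
    algebraMap (PowerSeries F) (LaurentSeries F) PowerSeries.X ^ n = single n 1 := by
  rw [coe_algebraMap, ofPowerSeries_X, ← RatFunc.single_zpow]

theorem order_eq_of_orderTop_eq {x : LaurentSeries F} {n : ℤ} (hx : x.orderTop = n) :
    x.order = n := by
  have hx0 : x ≠ 0 := orderTop_ne_top.mp (by simp [hx])
  exact WithTop.coe_injective ((order_eq_orderTop_of_ne_zero hx0).trans hx)

theorem orderTop_surjective : Function.Surjective (orderTop : LaurentSeries F → WithTop ℤ) := by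
  intro m
  induction m with
  | top => exact ⟨0, orderTop_zero⟩
  | coe n => exact ⟨single n 1, orderTop_single one_ne_zero⟩

theorem mem_span_singleton_iff_orderTop_le {x y : LaurentSeries F} :
    y ∈ Submodule.span (PowerSeries F) {x} ↔ x.orderTop ≤ y.orderTop := by
  rw [Submodule.mem_span_singleton]
  constructor
  · rintro ⟨A, rfl⟩
    rw [Algebra.smul_def, orderTop_mul]
    exact le_add_of_nonneg_left (orderTop_ofPowerSeries_nonneg A)
  · intro hle
    rcases eq_or_ne x 0 with rfl | hx
    · simp_all
    have hquot : 0 ≤ (y * x⁻¹).orderTop := by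
      have hsum : (y * x⁻¹).orderTop + x.orderTop = y.orderTop := by
        rw [← orderTop_mul, inv_mul_cancel_right₀ hx]
      rw [← hsum, ← order_eq_orderTop_of_ne_zero hx] at hle
      generalize (y * x⁻¹).orderTop = q at hle ⊢
      induction q with
      | top => exact le_top
      | coe q => norm_cast at hle ⊢; omega
    obtain ⟨A, hA⟩ := exists_ofPowerSeries_eq_of_orderTop_nonneg hquot
    refine ⟨A, ?_⟩
    rw [Algebra.smul_def]
    change ofPowerSeries ℤ F A * x = y
    rw [hA, inv_mul_cancel_right₀ hx]

theorem iInf_span_singleton_eq_span_single_iff {ι : Type*} (f : ι → LaurentSeries F) (n : ℤ) :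
    ⨅ i, Submodule.span (PowerSeries F) {f i} = Submodule.span (PowerSeries F) {single n 1} ↔
      IsGreatest (Set.range fun i => (f i).orderTop) n := by
  simp only [SetLike.ext_iff, Submodule.mem_iInf, mem_span_singleton_iff_orderTop_le,
    orderTop_single one_ne_zero]
  rw [← orderTop_surjective.forall (p := fun m => (∀ i, (f i).orderTop ≤ m) ↔ n ≤ m)]
  constructor
  · intro h
    have hlub : IsLUB (Set.range fun i => (f i).orderTop) n :=
      isLUB_iff_le_iff.mpr fun m => by simp [upperBounds, h m]
    exact ⟨hlub.mem_of_not_isSuccPrelimit (Order.not_isSuccPrelimit_iff.mpr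
      ⟨_, WithTop.coe_covBy_coe.mpr (Order.sub_one_covBy n)⟩), hlub.1⟩
  · intro h m
    have := isLUB_iff_le_iff.mp h.isLUB m
    simp_all [upperBounds]

theorem orderTop_sq_add_self_of_order_neg {h : LaurentSeries F} (hh : h.order < 0) :
    (h ^ 2 + h).orderTop = ↑(2 * h.order) := by
  have hh0 : h ≠ 0 := by rintro rfl; simp at hh
  have hsq : (h ^ 2).orderTop = ↑(2 * h.order) := by
    rw [pow_two, orderTop_mul, ← order_eq_orderTop_of_ne_zero hh0, two_mul, WithTop.coe_add]
  rw [orderTop_add_eq_left, hsq]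
  rw [hsq, ← order_eq_orderTop_of_ne_zero hh0, WithTop.coe_lt_coe]
  omega

theorem even_order_sq_add_self_of_order_neg {h : LaurentSeries F}
    (hneg : (h ^ 2 + h).order < 0) : Even (h ^ 2 + h).order := by
  rcases lt_or_ge h.order 0 with hh | hh
  · rw [order_eq_of_orderTop_eq (orderTop_sq_add_self_of_order_neg hh)]
    exact even_two_mul _
  · have hne : h ^ 2 + h ≠ 0 := by rintro hz; simp [hz] at hneg
    have := min_order_le_order_add hne
    rw [order_pow, two_nsmul] at this
    omega

theorem orderTop_sq_add_self_add_le_of_odd_order {c : LaurentSeries F} (hc : c.order < 0)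
    (hodd : Odd c.order) (h : LaurentSeries F) : (h ^ 2 + h + c).orderTop ≤ c.orderTop := by
  have hc0 : c ≠ 0 := by rintro rfl; simp at hc
  have hne : (h ^ 2 + h).orderTop ≠ c.orderTop := by
    intro heq
    rw [← order_eq_orderTop_of_ne_zero hc0] at heq
    rw [← order_eq_of_orderTop_eq heq] at hc hodd
    exact Int.not_even_iff_odd.mpr hodd (even_order_sq_add_self_of_order_neg hc)
  have hmin := (addVal ℤ F).map_add_of_distinct_val (by simpa only [addVal_apply] using hne)
  simp only [addVal_apply] at hmin
  exact hmin ▸ min_le_right _ _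

theorem even_order_sq_add_self_add_of_residue {c : LaurentSeries F} (hc : 0 ≤ c.orderTop)
    (hres : ∀ e : F, e ^ 2 + e + c.coeff 0 ≠ 0) (h : LaurentSeries F) :
    h ^ 2 + h + c ≠ 0 ∧ Even (h ^ 2 + h + c).order := by
  rcases lt_or_ge h.order 0 with hh | hh
  · have hsq := orderTop_sq_add_self_of_order_neg hh
    have hsum : (h ^ 2 + h + c).orderTop = ↑(2 * h.order) := by
      rw [orderTop_add_eq_left, hsq]
      exact hsq ▸ lt_of_lt_of_le (by norm_cast; omega) hc
    refine ⟨orderTop_ne_top.mp (hsum ▸ WithTop.coe_ne_top), ?_⟩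
    rw [order_eq_of_orderTop_eq hsum]
    exact even_two_mul _
  · obtain ⟨H, rfl⟩ := exists_ofPowerSeries_eq_of_orderTop_nonneg (zero_le_orderTop_iff.mpr hh)
    obtain ⟨C, rfl⟩ := exists_ofPowerSeries_eq_of_orderTop_nonneg hc
    have hcoeff : (ofPowerSeries ℤ F (H ^ 2 + H + C)).coeff 0 ≠ 0 := by
      rw [coeff_zero_ofPowerSeries] at hres ⊢
      simpa using hres (PowerSeries.constantCoeff H)
    have horder : (ofPowerSeries ℤ F (H ^ 2 + H + C)).orderTop = ↑(0 : ℤ) :=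
      le_antisymm (orderTop_le_of_coeff_ne_zero hcoeff) (orderTop_ofPowerSeries_nonneg _)
    simp only [map_add, map_pow] at horder
    refine ⟨orderTop_ne_top.mp (horder ▸ WithTop.coe_ne_top), ?_⟩
    rw [order_eq_of_orderTop_eq horder]
    exact Even.zero

theorem even_order_sq_add_mul_add_sq_mul {a : LaurentSeries F}
    (ha : ∀ h, h ^ 2 + h + a ≠ 0 ∧ Even (h ^ 2 + h + a).order) {u v : LaurentSeries F}
    (huv : u ≠ 0 ∨ v ≠ 0) : Even (u ^ 2 + u * v + v ^ 2 * a).order := by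
  rcases eq_or_ne v 0 with rfl | hv
  · simp only [mul_zero, add_zero, ne_eq, OfNat.ofNat_ne_zero, not_false_eq_true, zero_pow,
      zero_mul, order_pow, two_nsmul]
    exact ⟨_, rfl⟩
  · have hfactor : u ^ 2 + u * v + v ^ 2 * a = v ^ 2 * ((u / v) ^ 2 + u / v + a) := by
      field_simp
    rw [hfactor, order_mul (pow_ne_zero 2 hv) (ha _).1, order_pow, two_nsmul]
    exact Even.add ⟨_, rfl⟩ (ha _).2

section CharTwo

variable [CharP F 2]

theorem exists_sq_add_self_add_eq_zero {c : LaurentSeries F} (hc : 0 ≤ c.orderTop) {e : F}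
    (he : e ^ 2 + e + c.coeff 0 = 0) : ∃ g : LaurentSeries F, g ^ 2 + g + c = 0 := by
  obtain ⟨C, rfl⟩ := exists_ofPowerSeries_eq_of_orderTop_nonneg hc
  rw [coeff_zero_ofPowerSeries] at he
  obtain ⟨u, hu⟩ := PowerSeries.exists_sq_add_self_add_eq_zero C he
  exact ⟨ofPowerSeries ℤ F u, by rw [← map_pow, ← map_add, ← map_add, hu, map_zero]⟩

theorem isGreatest_range_orderTop_sq_add_self_add {a h₀ : LaurentSeries F}
    (hneg : (h₀ ^ 2 + h₀ + a).order < 0) (hodd : Odd (h₀ ^ 2 + h₀ + a).order) :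
    IsGreatest (Set.range fun h => (h ^ 2 + h + a).orderTop) (h₀ ^ 2 + h₀ + a).orderTop := by
  refine ⟨⟨h₀, rfl⟩, ?_⟩
  rintro _ ⟨h, rfl⟩
  dsimp only
  rw [← sub_add_cancel h h₀, sq_add_self_add_add]
  exact orderTop_sq_add_self_add_le_of_odd_order hneg hodd _

theorem sq_add_self_add_ne_zero_of_odd_order {a h₀ : LaurentSeries F}
    (hneg : (h₀ ^ 2 + h₀ + a).order < 0) (hodd : Odd (h₀ ^ 2 + h₀ + a).order)
    (h : LaurentSeries F) : h ^ 2 + h + a ≠ 0 := by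
  intro hz
  have hle := (isGreatest_range_orderTop_sq_add_self_add hneg hodd).2 ⟨h, rfl⟩
  simp only [hz, orderTop_zero, top_le_iff, orderTop_eq_top] at hle
  simp [hle] at hneg

theorem exists_iInf_span_sq_add_self_add_eq_iff_odd {a : LaurentSeries F} :
    (∃ t : ℕ, 0 < t ∧ ⨅ h, Submodule.span (PowerSeries F) {h ^ 2 + h + a} =
        Submodule.span (PowerSeries F) {single (-2 * (t : ℤ) + 1) 1}) ↔
      ∃ h₀ : LaurentSeries F,
        (h₀ ^ 2 + h₀ + a).order < 0 ∧ Odd (h₀ ^ 2 + h₀ + a).order := by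
  simp only [iInf_span_singleton_eq_span_single_iff]
  constructor
  · rintro ⟨t, ht, ⟨h₀, hh₀⟩, -⟩
    refine ⟨h₀, ?_⟩
    rw [order_eq_of_orderTop_eq hh₀]
    exact ⟨by omega, -t, by ring⟩
  · rintro ⟨h₀, hneg, s, hs⟩
    refine ⟨(-s).toNat, by omega, ?_⟩
    convert isGreatest_range_orderTop_sq_add_self_add hneg ⟨s, hs⟩
    have hne := sq_add_self_add_ne_zero_of_odd_order hneg ⟨s, hs⟩ h₀
    rw [← order_eq_orderTop_of_ne_zero hne, WithTop.coe_inj]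
    omega

variable [PerfectRing F 2]

theorem exists_orderTop_lt_orderTop_sq_add_self_add {a : LaurentSeries F}
    (ha : a.order < 0) (heven : Even a.order) :
    ∃ h : LaurentSeries F, a.orderTop < (h ^ 2 + h + a).orderTop := by
  obtain ⟨m, hm⟩ := heven
  obtain ⟨e, he⟩ := surjective_frobenius F 2 (a.coeff a.order)
  rw [frobenius_def] at he
  have ha0 : a ≠ 0 := by rintro rfl; simp at ha
  refine ⟨single m e, ?_⟩
  rw [← order_eq_orderTop_of_ne_zero ha0]
  refine lt_of_lt_of_le (WithTop.coe_lt_coe.mpr (lt_add_one a.order))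
    (le_orderTop_iff_forall.mpr fun j hj => ?_)
  rw [WithTop.coe_lt_coe, Int.lt_add_one_iff] at hj
  rw [pow_two, single_mul_single, coeff_add, coeff_add, coeff_single_of_ne (by omega : j ≠ m),
    add_zero, ← pow_two, he]
  rcases hj.lt_or_eq with hlt | rfl
  · rw [coeff_single_of_ne (by omega), coeff_eq_zero_of_lt_order hlt, add_zero]
  · rw [hm, coeff_single_same, CharTwo.add_self_eq_zero]

theorem exists_sq_add_self_add_nonneg_or_odd (a : LaurentSeries F) :
    ∃ h : LaurentSeries F, 0 ≤ (h ^ 2 + h + a).orderTop ∨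
      ((h ^ 2 + h + a).order < 0 ∧ Odd (h ^ 2 + h + a).order) := by
  induction hn : (-a.order).toNat using Nat.strong_induction_on generalizing a with
  | _ n ih =>
  rcases le_or_gt 0 a.order with hnn | hneg
  · exact ⟨0, Or.inl (by simpa [zero_le_orderTop_iff] using hnn)⟩
  rcases Int.even_or_odd a.order with heven | hodd
  · obtain ⟨h₁, hlt⟩ := exists_orderTop_lt_orderTop_sq_add_self_add hneg heven
    have hord : a.order < (h₁ ^ 2 + h₁ + a).order := by
      have ha0 : a ≠ 0 := by rintro rfl; simp at hneg
      rcases eq_or_ne (h₁ ^ 2 + h₁ + a) 0 with hz | hz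
      · rwa [hz, order_zero]
      · rwa [← WithTop.coe_lt_coe, order_eq_orderTop_of_ne_zero hz,
          order_eq_orderTop_of_ne_zero ha0]
    obtain ⟨h₂, H⟩ := ih _ (by omega) (h₁ ^ 2 + h₁ + a) rfl
    exact ⟨h₂ + h₁, by rwa [sq_add_self_add_add]⟩
  · exact ⟨0, Or.inr (by simpa using ⟨hneg, hodd⟩)⟩

theorem exists_sq_add_self_add_normal_form (a : LaurentSeries F) :
    ∃ h : LaurentSeries F, h ^ 2 + h + a = 0 ∨
      ((h ^ 2 + h + a).order < 0 ∧ Odd (h ^ 2 + h + a).order) ∨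
      (0 ≤ (h ^ 2 + h + a).orderTop ∧
        ∀ e : F, e ^ 2 + e + (h ^ 2 + h + a).coeff 0 ≠ 0) := by
  obtain ⟨h, hnn | hodd⟩ := exists_sq_add_self_add_nonneg_or_odd a
  · by_cases hres : ∃ e : F, e ^ 2 + e + (h ^ 2 + h + a).coeff 0 = 0
    · obtain ⟨e, he⟩ := hres
      obtain ⟨g, hg⟩ := exists_sq_add_self_add_eq_zero hnn he
      exact ⟨g + h, Or.inl (by rw [sq_add_self_add_add, hg])⟩
    · push Not at hres
      exact ⟨h, Or.inr (Or.inr ⟨hnn, hres⟩)⟩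
  · exact ⟨h, Or.inr (Or.inl hodd)⟩

end CharTwo

end LaurentSeries

section QuadraticExtension

variable {K L : Type*} [Field K] [Field L] [Algebra K L]

theorem mem_range_algebraMap_iff_exists_sq_add_self_add_eq_zero [CharP K 2] {a : K} {b : L}
    (hb : b ^ 2 + b = algebraMap K L a) :
    b ∈ Set.range (algebraMap K L) ↔ ∃ h : K, h ^ 2 + h + a = 0 := by
  have := charP_of_injective_algebraMap (algebraMap K L).injective 2
  constructor
  · rintro ⟨h, rfl⟩
    refine ⟨h, (algebraMap K L).injective ?_⟩
    rw [map_add, map_add, map_pow, hb, map_zero, CharTwo.add_self_eq_zero]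
  · rintro ⟨h, hh⟩
    have hh' := congrArg (algebraMap K L) hh
    rw [map_add, map_add, map_pow, map_zero] at hh'
    set h' := algebraMap K L h
    have hfac : (b + h') * (b + h' + 1) = 0 := by
      linear_combination hb + hh' + b * h' * CharTwo.two_eq_zero (R := L)
    rcases mul_eq_zero.mp hfac with hroot | hroot
    · exact ⟨h, by linear_combination -hroot + h' * CharTwo.two_eq_zero (R := L)⟩
    · refine ⟨h + 1, ?_⟩
      rw [map_add, map_one]
      linear_combination -hroot + (h' + 1) * CharTwo.two_eq_zero (R := L)

theorem finrank_adjoin_simple_eq_two_iff [CharP K 2] {a : K} {b : L}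
    (hb : b ^ 2 + b = algebraMap K L a) :
    Module.finrank K K⟮b⟯ = 2 ↔ ∀ h : K, h ^ 2 + h + a ≠ 0 := by
  simp only [ne_eq, ← not_exists, ← mem_range_algebraMap_iff_exists_sq_add_self_add_eq_zero hb]
  constructor
  · intro h2 hmem
    rw [adjoin_simple_eq_bot_iff.mpr (mem_bot.mpr hmem), IntermediateField.finrank_bot] at h2
    exact absurd h2 (by norm_num)
  · intro hnr
    have hmonic : (Polynomial.X ^ 2 + Polynomial.X - Polynomial.C a).Monic := by monicity!
    have haeval : Polynomial.aeval b (Polynomial.X ^ 2 + Polynomial.X - Polynomial.C a) = 0 := by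
      simp [hb]
    have hint : IsIntegral K b := ⟨_, hmonic, haeval⟩
    have hle : (minpoly K b).natDegree ≤ 2 := by
      refine (Polynomial.natDegree_le_natDegree (minpoly.min K b hmonic haeval)).trans ?_
      compute_degree!
    have hpos := minpoly.natDegree_pos hint
    have hne : (minpoly K b).natDegree ≠ 1 := fun h1 => hnr (minpoly.natDegree_eq_one_iff.mp h1)
    rw [adjoin.finrank hint]
    omega

theorem exists_basis_one_self (hL : Module.finrank K L = 2) {x : L}
    (hx : x ∉ Set.range (algebraMap K L)) :
    ∃ B : Module.Basis (Fin 2) K L, B 0 = 1 ∧ B 1 = x := by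
  have hli : LinearIndependent K ![1, x] := by
    rw [LinearIndependent.pair_iff]
    intro s t hst
    rw [Algebra.smul_def, mul_one, Algebra.smul_def] at hst
    by_cases ht : t = 0
    · rw [ht, map_zero, zero_mul, add_zero, map_eq_zero] at hst
      exact ⟨hst, ht⟩
    · refine absurd ⟨-(s / t), ?_⟩ hx
      have htL : algebraMap K L t ≠ 0 := (map_ne_zero _).mpr ht
      rw [map_neg, map_div₀, neg_eq_iff_eq_neg, div_eq_iff htL, eq_comm]
      linear_combination -hst
  have hcard : Fintype.card (Fin 2) = Module.finrank K L := by rw [hL, Fintype.card_fin]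
  refine ⟨basisOfLinearIndependentOfCardEqFinrank hli hcard, ?_, ?_⟩ <;>
    simp [coe_basisOfLinearIndependentOfCardEqFinrank]

theorem exists_algebraMap_add_algebraMap_mul_eq (hL : Module.finrank K L = 2) {x : L}
    (hx : x ∉ Set.range (algebraMap K L)) (y : L) :
    ∃ u v : K, algebraMap K L u + algebraMap K L v * x = y := by
  obtain ⟨B, hB0, hB1⟩ := exists_basis_one_self hL hx
  refine ⟨B.repr y 0, B.repr y 1, ?_⟩
  have hsum := B.sum_repr y
  rwa [Fin.sum_univ_two, hB0, hB1, Algebra.smul_def, Algebra.smul_def, mul_one] at hsum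

theorem Algebra.norm_algebraMap_add_algebraMap_mul (hL : Module.finrank K L = 2) {x : L}
    (hx : x ∉ Set.range (algebraMap K L)) {c : K} (hc : x ^ 2 + x = algebraMap K L c)
    (u v : K) :
    Algebra.norm K (algebraMap K L u + algebraMap K L v * x) = u ^ 2 - u * v - v ^ 2 * c := by
  obtain ⟨B, hB0, hB1⟩ := exists_basis_one_self hL hx
  set y := algebraMap K L u + algebraMap K L v * x
  have hy0 : y * B 0 = u • B 0 + v • B 1 := by
    simp only [hB0, hB1, Algebra.smul_def, mul_one, y]
  have hy1 : y * B 1 = (v * c) • B 0 + (u - v) • B 1 := by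
    simp only [hB0, hB1, Algebra.smul_def, mul_one, y, map_mul, map_sub]
    linear_combination (algebraMap K L v) * hc
  have hM : Algebra.leftMulMatrix B y = !![u, v * c; v, u - v] := by
    ext i j
    rw [Algebra.leftMulMatrix_eq_repr_mul]
    fin_cases i <;> fin_cases j <;> simp [hy0, hy1]
  rw [Algebra.norm_eq_matrix_det B, hM, Matrix.det_fin_two_of]
  ring

end QuadraticExtension

namespace LaurentSeries

variable {F L : Type*} [Field F] [CharP F 2] [Field L] [Algebra (LaurentSeries F) L]

theorem even_order_norm_of_forall_even {a : LaurentSeries F}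
    (ha : ∀ h, h ^ 2 + h + a ≠ 0 ∧ Even (h ^ 2 + h + a).order)
    (hL : Module.finrank (LaurentSeries F) L = 2) {x : L}
    (hx : x ∉ Set.range (algebraMap (LaurentSeries F) L))
    (hxa : x ^ 2 + x = algebraMap (LaurentSeries F) L a) {y : L} (hy : y ≠ 0) :
    Even (Algebra.norm (LaurentSeries F) y).order := by
  obtain ⟨u, v, rfl⟩ := exists_algebraMap_add_algebraMap_mul_eq hL hx y
  have huv : u ≠ 0 ∨ v ≠ 0 := by
    by_contra! huv
    simp [huv] at hy
  rw [Algebra.norm_algebraMap_add_algebraMap_mul hL hx hxa, CharTwo.sub_eq_add,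
    CharTwo.sub_eq_add]
  exact even_order_sq_add_mul_add_sq_mul ha huv

theorem exists_odd_order_norm_iff [PerfectRing F 2] {a : LaurentSeries F}
    (hL : Module.finrank (LaurentSeries F) L = 2) {x : L}
    (hx : x ∉ Set.range (algebraMap (LaurentSeries F) L))
    (hxa : x ^ 2 + x = algebraMap (LaurentSeries F) L a) :
    (∃ y : L, y ≠ 0 ∧ Odd (Algebra.norm (LaurentSeries F) y).order) ↔
      ∃ h₀ : LaurentSeries F,
        (h₀ ^ 2 + h₀ + a).order < 0 ∧ Odd (h₀ ^ 2 + h₀ + a).order := by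
  constructor
  · rintro ⟨y, hy, hyodd⟩
    obtain ⟨h₀, hzero | hodd | ⟨hnn, hres⟩⟩ := exists_sq_add_self_add_normal_form a
    · have hmem := (mem_range_algebraMap_iff_exists_sq_add_self_add_eq_zero hxa).mpr ⟨h₀, hzero⟩
      exact absurd hmem hx
    · exact ⟨h₀, hodd⟩
    · have ha : ∀ h, h ^ 2 + h + a ≠ 0 ∧ Even (h ^ 2 + h + a).order := fun h => by
        rw [← sub_add_cancel h h₀, sq_add_self_add_add]
        exact even_order_sq_add_self_add_of_residue hnn hres _
      exact absurd (even_order_norm_of_forall_even ha hL hx hxa hy) (Int.not_even_iff_odd.mpr hyodd)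
  · rintro ⟨h₀, hodd⟩
    have hnorm := Algebra.norm_algebraMap_add_algebraMap_mul hL hx hxa h₀ 1
    rw [map_one, one_mul, mul_one, one_pow, one_mul, CharTwo.sub_eq_add, CharTwo.sub_eq_add]
      at hnorm
    refine ⟨algebraMap _ L h₀ + x, fun h0 => hx ⟨-h₀, ?_⟩, hnorm ▸ hodd.2⟩
    rw [map_neg]
    linear_combination -h0

end LaurentSeries

open LaurentSeries in
theorem ASdefect_eq_odd_neg_iff_ramified_general (τ : ℕ) (a : Kk τ)
    (b : AlgebraicClosure (Kk τ))
    (hb : b ^ 2 + b = algebraMap (Kk τ) (AlgebraicClosure (Kk τ)) a) :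
    (∃ t : ℕ, 0 < t ∧
        ASdefect τ a = Submodule.span (Ok τ) {pp τ ^ (-2 * (t : ℤ) + 1)}) ↔
      IsRamifiedQuadExt τ ((Kk τ)⟮b⟯) := by
  set x := AdjoinSimple.gen (Kk τ) b
  have hx : x ^ 2 + x = algebraMap (Kk τ) (Kk τ)⟮b⟯ a :=
    (algebraMap (Kk τ)⟮b⟯ (AlgebraicClosure (Kk τ))).injective (by simpa [x] using hb)
  have hrank := finrank_adjoin_simple_eq_two_iff hb
  have hxK (hL : Module.finrank (Kk τ) (Kk τ)⟮b⟯ = 2) :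
      x ∉ Set.range (algebraMap (Kk τ) (Kk τ)⟮b⟯) := by
    simpa [mem_range_algebraMap_iff_exists_sq_add_self_add_eq_zero hx] using hrank.mp hL
  simp only [ASdefect, pp, algebraMap_X_zpow, exists_iInf_span_sq_add_self_add_eq_iff_odd,
    IsRamifiedQuadExt]
  constructor
  · rintro ⟨h₀, hneg, hodd⟩
    have hL := hrank.mpr (sq_add_self_add_ne_zero_of_odd_order hneg hodd)
    exact ⟨hL, (exists_odd_order_norm_iff hL (hxK hL) hx).mpr ⟨h₀, hneg, hodd⟩⟩
  · rintro ⟨hL, hy⟩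
    exact (exists_odd_order_norm_iff hL (hxK hL) hx).mp hy

/-- for `b` in an algebraic closure of `K` with `b² + b = a`,
`D(a) = (π^{-2t+1})` for some `t > 0` if and only if `K(b)/K` is a ramified
quadratic extension. -/
theorem ASdefect_eq_odd_neg_iff_ramified (τ : ℕ) (hτ : 0 < τ) (a : Kk τ)
    (b : AlgebraicClosure (Kk τ))
    (hb : b ^ 2 + b = algebraMap (Kk τ) (AlgebraicClosure (Kk τ)) a) :
    (∃ t : ℕ, 0 < t ∧
        ASdefect τ a = Submodule.span (Ok τ) {pp τ ^ (-2 * (t : ℤ) + 1)}) ↔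
      IsRamifiedQuadExt τ ((Kk τ)⟮b⟯) :=
  ASdefect_eq_odd_neg_iff_ramified_general τ a b hb
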